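/- Let μ(s) be a rational function of q^s of the form μ(s) = ∏_i [(a_i - q^{-s})(a_i - q^{s})] / [(b_i - q^{-s})(b_i - q^{s})] with a_i, b_i nonzero complex numbers. If all zeros of μ lie in (2πi/(n f log p))ℤ (where q = p^f) then a_i^n = 1 for each i. -/
import Mathlib


open Complex

/-- Let `q = p^f` and let
`μ(s) = ∏ i, ((a i - q^{-s})(a i - q^{s})) / ((b i - q^{-s})(b i - q^{s}))`
with all `a i`, `b i` nonzero and no cancellation between numerator and denominator.
If all zeros of `μ` lie in `(2πi/(n f log p)) ℤ`, then `(a i)^n = 1` for every `i`. -/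
theorem zeros_in_lattice_imp_root_of_unity
    (p f n ι : ℕ) (hp : p.Prime) (hf : 0 < f) (hn : 0 < n)
    (a b : Fin ι → ℂ) (ha : ∀ i, a i ≠ 0) (hb : ∀ i, b i ≠ 0)
    (hab : ∀ i j, a i ≠ b j)
    (μ : ℂ → ℂ)
    (hμ : ∀ s : ℂ, μ s =
      ∏ i : Fin ι, ((a i - ((p : ℂ) ^ (f : ℕ)) ^ (-s)) * (a i - ((p : ℂ) ^ (f : ℕ)) ^ s)) /
        ((b i - ((p : ℂ) ^ (f : ℕ)) ^ (-s)) * (b i - ((p : ℂ) ^ (f : ℕ)) ^ s)))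
    (hzeros : ∀ s : ℂ, μ s = 0 →
      ∃ k : ℤ, s = 2 * Real.pi * I * k / ((n : ℂ) * (f : ℂ) * Real.log p)) :
    ∀ i, (a i) ^ n = 1 := by
  intro i
  have hp2 : (2:ℝ) ≤ p := by exact_mod_cast hp.two_le
  have hlp : Real.log p ≠ 0 := ne_of_gt (Real.log_pos (by linarith))
  have hfne : (f : ℂ) ≠ 0 := Nat.cast_ne_zero.mpr hf.ne'
  have hnne : (n : ℂ) ≠ 0 := Nat.cast_ne_zero.mpr hn.ne'
  have hlpc : (Real.log p : ℂ) ≠ 0 := Complex.ofReal_ne_zero.mpr hlp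
  set c : ℂ := (f : ℂ) * Real.log p with hc
  have hcne : c ≠ 0 := mul_ne_zero hfne hlpc
  have hq : ((p:ℂ) ^ (f:ℕ)) ≠ 0 :=
    pow_ne_zero _ (Nat.cast_ne_zero.mpr hp.pos.ne')
  have hlogq : Complex.log ((p:ℂ) ^ (f:ℕ)) = c := by
    have h1 : ((p:ℂ) ^ (f:ℕ)) = (((p:ℝ) ^ (f:ℕ) : ℝ) : ℂ) := by push_cast; ring
    rw [h1, ← Complex.ofReal_log (by positivity), Real.log_pow,
      Complex.ofReal_mul, Complex.ofReal_natCast, hc]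
  set s₀ : ℂ := Complex.log (a i) / c with hs0
  have hcs : c * s₀ = Complex.log (a i) := by
    rw [hs0]; field_simp
  have hqs : ((p:ℂ) ^ (f:ℕ)) ^ s₀ = a i := by
    rw [Complex.cpow_def_of_ne_zero hq, hlogq, hcs]
    exact Complex.exp_log (ha i)
  have hμ0 : μ s₀ = 0 := by
    rw [hμ]
    apply Finset.prod_eq_zero (Finset.mem_univ i)
    rw [hqs]
    simp
  obtain ⟨k, hk⟩ := hzeros s₀ hμ0
  have hai : a i = Complex.exp (2 * Real.pi * I * k / n) := by
    have hden : (n:ℂ) * (f:ℂ) * ((Real.log p : ℝ) : ℂ) = (n:ℂ) * c := by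
      rw [hc]; ring
    rw [← hqs, Complex.cpow_def_of_ne_zero hq, hlogq, hk, hden]
    congr 1
    field_simp
  rw [hai, ← Complex.exp_nat_mul]
  have h2 : (n:ℂ) * (2 * Real.pi * I * k / n) = k * (2 * Real.pi * I) := by
    field_simp
  rw [h2, Complex.exp_int_mul_two_pi_mul_I]
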